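/- arXiv:1602.01591 — 4 statements merged into one kernel-verified Lean document; each statement's English description precedes it below -/
import Mathlib

section
/- Let p, q be odd primes and b, c ≥ 1 integers such that q = σ(p^{2b})/u for a positive integer u, and p^c exactly divides q+1 (i.e., p^c | q+1 but p^{c+1} ∤ q+1). Then (p-1)·u ≡ 1 (mod p^c), and consequently (p-1)·u > p^c. -/
/-!
With `k = 2b`: since `(p - 1) σ(p^k) = p^(k+1) - 1`, the relation `q u = σ(p^k)` gives
`(p - 1) u - 1 = (p - 1) u (q + 1) - p^(k+1)`. Modulo `p^c`, which divides `q + 1` and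
(as `p^c ≤ q + 1 ≤ p^(k+1)`) also `p^(k+1)`, the right-hand side vanishes. As `p ≥ 3` and
`u ≥ 1`, `(p - 1) u ≥ 2`, so `p^c` divides the positive number `(p - 1) u - 1`.
-/

open ArithmeticFunction
open scoped ArithmeticFunction.sigma

namespace Nat

theorem sub_one_mul_sigma_one_prime_pow {p : ℕ} (hp : p.Prime) (k : ℕ) :
    ((p : ℤ) - 1) * σ 1 (p ^ k) = (p : ℤ) ^ (k + 1) - 1 := by
  rw [sigma_one_apply_prime_pow hp]
  push_cast
  rw [mul_comm, geom_sum_mul]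

theorem sigma_one_prime_pow_lt {p : ℕ} (hp : p.Prime) (k : ℕ) : σ 1 (p ^ k) < p ^ (k + 1) := by
  rw [sigma_one_apply_prime_pow hp]
  exact geomSum_lt hp.two_le fun i hi => Finset.mem_range.mp hi

section MulEqSigma

variable {p q u k : ℕ} (hp : p.Prime) (hqu : q * u = σ 1 (p ^ k))
include hp hqu

theorem ne_zero_of_mul_eq_sigma_one_prime_pow : u ≠ 0 := by
  rintro rfl
  exact (sigma_pos 1 _ (pow_ne_zero k hp.ne_zero)).ne' (by simpa using hqu.symm)

theorem succ_le_prime_pow_succ_of_mul_eq_sigma_one : q + 1 ≤ p ^ (k + 1) := by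
  have hu := ne_zero_of_mul_eq_sigma_one_prime_pow hp hqu
  have hq : q ≤ q * u := Nat.le_mul_of_pos_right q (pos_of_ne_zero hu)
  have := sigma_one_prime_pow_lt hp k
  omega

theorem sub_one_mul_modEq_one_of_mul_eq_sigma_one {m : ℕ} (hmq : m ∣ q + 1)
    (hmp : m ∣ p ^ (k + 1)) : (p - 1) * u ≡ 1 [MOD m] := by
  have key : ((p : ℤ) - 1) * u * q = p ^ (k + 1) - 1 := by
    rw [← sub_one_mul_sigma_one_prime_pow hp, ← hqu]
    push_cast
    ring
  rw [modEq_iff_dvd]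
  have hdiff : (1 : ℤ) - ((p - 1) * u : ℕ) = p ^ (k + 1) - ((p : ℤ) - 1) * u * (q + 1) := by
    push_cast [hp.one_le]
    linear_combination key
  rw [cast_one, hdiff]
  have hmp' : (m : ℤ) ∣ (p : ℤ) ^ (k + 1) := mod_cast hmp
  have hmq' : (m : ℤ) ∣ (q : ℤ) + 1 := mod_cast hmq
  exact hmp'.sub (hmq'.mul_left _)

end MulEqSigma

theorem lt_of_modEq_one {n m : ℕ} (h : n ≡ 1 [MOD m]) (hn : 1 < n) : m < n := by
  have := le_of_dvd (by omega) ((modEq_iff_dvd' hn.le).mp h.symm)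
  omega

end Nat

theorem stmt_4_general (p q b c u : ℕ) (hp : p.Prime) (hpodd : Odd p)
    (hqu : q * u = ArithmeticFunction.sigma 1 (p ^ (2 * b)))
    (hdvd : p ^ c ∣ q + 1) :
    (p - 1) * u ≡ 1 [MOD p ^ c] ∧ (p - 1) * u > p ^ c := by
  have hpc : p ^ c ∣ p ^ (2 * b + 1) := by
    refine pow_dvd_pow p ((Nat.pow_le_pow_iff_right hp.two_le).mp ?_)
    exact (Nat.le_of_dvd (Nat.succ_pos q) hdvd).trans
      (Nat.succ_le_prime_pow_succ_of_mul_eq_sigma_one hp hqu)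
  have hmod := Nat.sub_one_mul_modEq_one_of_mul_eq_sigma_one hp hqu hdvd hpc
  have hu := Nat.ne_zero_of_mul_eq_sigma_one_prime_pow hp hqu
  have hp1 : 2 ≤ p - 1 := by
    obtain ⟨r, rfl⟩ := hpodd
    have := hp.two_le
    omega
  have hgt : 1 < (p - 1) * u := by nlinarith [Nat.pos_of_ne_zero hu]
  exact ⟨hmod, Nat.lt_of_modEq_one hmod hgt⟩

theorem stmt_4 (p q b c u : ℕ) (hp : p.Prime) (hpodd : Odd p) (hq : q.Prime) (hqodd : Odd q)
    (hb : 1 ≤ b) (hc : 1 ≤ c) (hu : 0 < u) (hqu : q * u = ArithmeticFunction.sigma 1 (p ^ (2 * b)))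
    (hdvd : p ^ c ∣ q + 1) (hndvd : ¬ p ^ (c + 1) ∣ q + 1) :
    (p - 1) * u ≡ 1 [MOD p ^ c] ∧ (p - 1) * u > p ^ c :=
  stmt_4_general p q b c u hp hpodd hqu hdvd
end

section
/- Let N = q n^2 be an odd perfect number in Eulerian form with k = 1, and let p be the unique prime with q | σ(p^{2b}) where p^{2b} || N. If p divides σ(q) = q + 1, then N > 2q^3. -/
/-!
Write `n² = p^(2b) u` and `σ(p^(2b)) = q m`. Perfectness gives `(q + 1) · q m · σ(u) = 2N`, and
since `p ∤ σ(p^(2b))`, comparing `p`-adic valuations with `p^c ‖ q + 1` shows `p^(2b-c) ∣ σ(u)`.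
Reducing `q m = 1 + p + ⋯ + p^(2b)` modulo `p^c`, where `q ≡ -1`, gives
`p^c ∣ m + (1 + p + ⋯ + p^(c-1))`; with the parity of `m` this forces `m` to be of size about
`p^c`, whence `4 p^(2b+1) ≤ (p - 1) m² σ(u)` and so `m σ(u) > 4q`. Then `2N > (q + 1) q · 4q`.
-/

open ArithmeticFunction Finset

theorem geom_sum_modEq_of_modEq_one {a k : ℕ} (h : a ≡ 1 [MOD k]) (n : ℕ) :
    ∑ i ∈ range n, a ^ i ≡ n [MOD k] := by
  have := Nat.ModEq.sum (s := range n) fun i _ => h.pow i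
  simpa only [one_pow, sum_const, card_range, smul_eq_mul, mul_one] using this

theorem pow_dvd_add_geom_sum {p q m c n : ℕ} (hpc : p ^ c ∣ q + 1) (hcn : c ≤ n)
    (hS : q * m = ∑ i ∈ range n, p ^ i) : p ^ c ∣ m + ∑ i ∈ range c, p ^ i := by
  have htail : ∑ i ∈ Ico c n, (p : ZMod (p ^ c)) ^ i = 0 := sum_eq_zero fun i hi => by
    obtain ⟨j, rfl⟩ := Nat.exists_eq_add_of_le (mem_Ico.1 hi).1
    rw [pow_add, ← Nat.cast_pow, ZMod.natCast_self, zero_mul]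
  have hq : (q : ZMod (p ^ c)) = -1 :=
    eq_neg_of_add_eq_zero_left (by exact_mod_cast (ZMod.natCast_eq_zero_iff _ _).2 hpc)
  rw [← ZMod.natCast_eq_zero_iff]
  have := congrArg (Nat.cast : ℕ → ZMod (p ^ c)) hS
  push_cast [hq, ← sum_range_add_sum_Ico _ hcn, htail] at this ⊢
  linear_combination -this

theorem not_five_dvd_sigma_three_pow_two_mul (b : ℕ) : ¬ 5 ∣ sigma 1 (3 ^ (2 * b)) := by
  rw [sigma_one_apply_prime_pow Nat.prime_three, ← ZMod.natCast_eq_zero_iff]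
  intro h
  have hgeom := geom_sum_mul_add (2 : ZMod 5) (2 * b + 1)
  push_cast at h
  rw [show (2 + 1 : ZMod 5) = 3 by rfl, h, pow_succ, pow_mul, show (3 : ZMod 5) ^ 2 = -1 by rfl]
    at hgeom
  rcases neg_one_pow_eq_or (ZMod 5) b with hb | hb <;> rw [hb] at hgeom <;> revert hgeom <;> decide

theorem sixteen_mul_le_pow_mul_pred {p c : ℕ} (hp : 3 ≤ p) (hpo : Odd p) (hc : Even c)
    (hc2 : 2 ≤ c) (h32 : ¬(p = 3 ∧ c = 2)) : 16 * p ≤ p ^ c * (p - 1) := by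
  rcases eq_or_ne p 3 with rfl | hp3
  · have hc4 : 4 ≤ c := by obtain ⟨j, rfl⟩ := hc; omega
    have : 3 ^ 4 ≤ 3 ^ c := Nat.pow_le_pow_right (by norm_num) hc4
    omega
  · have hp5 : 5 ≤ p := by have := Nat.odd_iff.1 hpo; omega
    have : p ^ 2 ≤ p ^ c := Nat.pow_le_pow_right (by omega) hc2
    have := Nat.mul_le_mul_left p (by omega : 4 ≤ p - 1)
    nlinarith

/-- With `A = 1 + p + ⋯ + p^(c-1) < p^c / 2`, the divisibility gives `m + A ≥ p^c`, and even
`m + A ≥ 2 p^c` when `c` is odd (then `m + A` is even). The single small solution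
`(p, c, m) = (3, 2, 5)` escaping the bound has to be excluded. -/
theorem four_mul_pow_succ_le_sq_mul {p c m : ℕ} (hp : 3 ≤ p) (hpo : Odd p) (hc : 0 < c)
    (hm : Odd m) (hdvd : p ^ c ∣ m + ∑ i ∈ range c, p ^ i) (h35 : p = 3 → m ≠ 5) :
    4 * p ^ (c + 1) ≤ m ^ 2 * (p - 1) := by
  rw [pow_succ]
  set A := ∑ i ∈ range c, p ^ i
  set P := p ^ c
  have hA : A * (p - 1) + 1 = P := by
    simpa only [Nat.sub_add_cancel (by omega : 1 ≤ p)] using geom_sum_mul_add (p - 1) c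
  have hA2 : 2 * A < P := by
    have := Nat.mul_le_mul_left A (by omega : 2 ≤ p - 1)
    omega
  obtain ⟨k, hk⟩ := hdvd
  have hk0 : k ≠ 0 := by rintro rfl; simp at hk; exact hm.pos.ne' hk.1
  rcases Nat.even_or_odd c with hce | hco
  · have hc2 : 2 ≤ c := by obtain ⟨j, rfl⟩ := hce; omega
    have hPk : P ≤ P * k := Nat.le_mul_of_pos_right P (Nat.pos_of_ne_zero hk0)
    by_cases h32 : p = 3 ∧ c = 2
    · obtain ⟨rfl, rfl⟩ := h32
      simp only [A, P, sum_range_succ, sum_range_zero] at hk ⊢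
      have hm14 : 14 ≤ m := by have := h35 rfl; omega
      nlinarith
    · have h16 : 16 * p ≤ P * (p - 1) := sixteen_mul_le_pow_mul_pred hp hpo hce hc2 h32
      have h2m : P * P ≤ (2 * m) ^ 2 := by nlinarith
      have := Nat.mul_le_mul_left P h16
      have := Nat.mul_le_mul_right (p - 1) h2m
      nlinarith
  · have hAodd : Odd A :=
      Nat.odd_iff.2 (Eq.trans (geom_sum_modEq_of_modEq_one (Nat.odd_iff.1 hpo) c)
        (Nat.odd_iff.1 hco))
    have hk2 : 2 ≤ k := by
      have : Even k :=
        (Nat.even_mul.1 (hk ▸ hm.add_odd hAodd)).resolve_left (Nat.not_even_iff_odd.2 hpo.pow)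
      obtain ⟨j, rfl⟩ := this; omega
    have hpP : p ≤ P := Nat.le_self_pow hc.ne' p
    have hPk : 2 * P ≤ P * k := by nlinarith
    have h2m : 3 * P + 1 ≤ 2 * m := by omega
    have := Nat.mul_le_mul_left m (by omega : 2 ≤ p - 1)
    nlinarith

theorem four_mul_lt_mul_of_dvd_sigma {p q m b c t : ℕ} (hp : p.Prime) (hp2 : p ≠ 2)
    (hS : q * m = sigma 1 (p ^ (2 * b))) (hc : 0 < c) (hcb : c ≤ 2 * b) (hpc : p ^ c ∣ q + 1)
    (ht0 : t ≠ 0) (ht : p ^ (2 * b - c) ∣ t) : 4 * q < m * t := by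
  have hpo : Odd p := hp.odd_of_ne_two hp2
  have hp3 : 3 ≤ p := by have := hp.two_le; have := Nat.odd_iff.1 hpo; omega
  have hsum := hS.trans (sigma_one_apply_prime_pow hp)
  have hgeom : q * m * (p - 1) + 1 = p ^ (2 * b + 1) := by
    simpa only [Nat.sub_add_cancel hp.one_le, ← hsum] using geom_sum_mul_add (p - 1) (2 * b + 1)
  have hm : Odd m := by
    have h := geom_sum_modEq_of_modEq_one (Nat.odd_iff.1 hpo) (2 * b + 1)
    rw [← hsum, Nat.ModEq, Nat.mul_add_mod] at h
    exact (Nat.odd_mul.1 (Nat.odd_iff.2 h)).2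
  have h35 : p = 3 → m ≠ 5 := by
    rintro rfl rfl
    exact not_five_dvd_sigma_three_pow_two_mul b ⟨q, by rw [← hS, mul_comm]⟩
  have hkey := four_mul_pow_succ_le_sq_mul hp3 hpo hc hm
    (pow_dvd_add_geom_sum hpc (by omega) hsum) h35
  have : (p - 1) * m * (4 * q) < (p - 1) * m * (m * t) := calc
    (p - 1) * m * (4 * q) < 4 * p ^ (2 * b + 1) := by rw [← hgeom]; nlinarith
    _ = 4 * p ^ (c + 1) * p ^ (2 * b - c) := by rw [mul_assoc, ← pow_add]; congr 2; omega
    _ ≤ m ^ 2 * (p - 1) * t := Nat.mul_le_mul hkey (Nat.le_of_dvd (Nat.pos_of_ne_zero ht0) ht)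
    _ = (p - 1) * m * (m * t) := by ring
  exact Nat.lt_of_mul_lt_mul_left this

theorem Nat.Prime.not_dvd_sigma_one_pow {p : ℕ} (hp : p.Prime) (k : ℕ) :
    ¬ p ∣ sigma 1 (p ^ k) := by
  rw [sigma_one_apply_prime_pow hp, sum_range_succ', pow_zero]
  exact fun h => hp.not_dvd_one <| (Nat.dvd_add_right <| dvd_sum fun i _ =>
    dvd_pow_self p i.succ_ne_zero).1 h

theorem sigma_one_apply_prime {q : ℕ} (hq : q.Prime) : sigma 1 q = q + 1 := by
  simpa [sum_range_succ, add_comm] using sigma_one_apply_prime_pow (i := 1) hq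

theorem ArithmeticFunction.IsMultiplicative.map_eq_map_prime_pow_mul_map_div {R : Type*}
    [MonoidWithZero R] {f : ArithmeticFunction R} (hf : f.IsMultiplicative) {p n k : ℕ}
    (hp : p.Prime) (hn : n ≠ 0) (hk : n.factorization p = k) :
    f n = f (p ^ k) * f (n / p ^ k) := by
  subst hk
  conv_lhs => rw [← Nat.ordProj_mul_ordCompl_eq_self n p]
  exact hf.map_mul_of_coprime ((Nat.coprime_ordCompl hp hn).pow_left _)

theorem sigma_one_prime_mul {q m p k : ℕ} (hq : q.Prime) (hqm : q.Coprime m) (hp : p.Prime)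
    (hm : m ≠ 0) (hk : m.factorization p = k) :
    sigma 1 (q * m) = (q + 1) * sigma 1 (p ^ k) * sigma 1 (m / p ^ k) := by
  rw [isMultiplicative_sigma.map_mul_of_coprime hqm, sigma_one_apply_prime hq, mul_assoc,
    isMultiplicative_sigma.map_eq_map_prime_pow_mul_map_div hp hm hk]

theorem factorization_add_eq_of_mul_mul_eq_two_mul {p a s t N : ℕ} (hp2 : p ≠ 2)
    (hs : ¬ p ∣ s) (hN : N ≠ 0) (h : a * s * t = 2 * N) :
    a.factorization p + t.factorization p = N.factorization p := by
  have hast : a * s * t ≠ 0 := h ▸ mul_ne_zero two_ne_zero hN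
  have hs0 : s ≠ 0 := by rintro rfl; simp at hast
  have := congrArg (·.factorization p) h
  simp only [Nat.factorization_mul (left_ne_zero_of_mul hast) (right_ne_zero_of_mul hast),
    Nat.factorization_mul (left_ne_zero_of_mul (left_ne_zero_of_mul hast)) hs0,
    Nat.factorization_mul two_ne_zero hN, Finsupp.add_apply,
    Nat.factorization_eq_zero_of_not_dvd hs, Nat.prime_two.factorization,
    Finsupp.single_eq_of_ne hp2] at this
  omega

theorem stmt_11_general (N q n p b : ℕ) (hN : N = q * n ^ 2) (hodd : Odd N) (hperf : Nat.Perfect N)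
    (hq : q.Prime) (hgcd : Nat.gcd q n = 1)
    (hp : p.Prime) (hpn : p ∣ n) (hpb : p ^ (2 * b) ∣ N) (hpb' : ¬ p ^ (2 * b + 1) ∣ N)
    (hqdvd : q ∣ ArithmeticFunction.sigma 1 (p ^ (2 * b)))
    (hpq : p ∣ q + 1) : N > 2 * q ^ 3 := by
  have hN0 : N ≠ 0 := hperf.2.ne'
  have hn0 : n ^ 2 ≠ 0 := by rintro h; simp [hN, h] at hN0
  have hp2 : p ≠ 2 := by
    rintro rfl
    exact Nat.not_even_iff_odd.2 hodd
      (even_iff_two_dvd.2 (hN ▸ (dvd_pow hpn two_ne_zero).mul_left q))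
  have hpq' : ¬ p ∣ q := fun h => hp.not_dvd_one (hgcd ▸ Nat.dvd_gcd h hpn)
  have hvN : N.factorization p = 2 * b := by
    rw [hp.pow_dvd_iff_le_factorization hN0] at hpb hpb'
    omega
  have hvn : (n ^ 2).factorization p = 2 * b := by
    rw [← hvN, hN, Nat.factorization_mul hq.ne_zero hn0, Finsupp.add_apply,
      Nat.factorization_eq_zero_of_not_dvd hpq', zero_add]
  set u := n ^ 2 / p ^ (2 * b)
  have hu0 : u ≠ 0 := (hvn ▸ Nat.ordCompl_pos p hn0).ne'
  obtain ⟨m, hm⟩ := hqdvd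
  have hσN : (q + 1) * (q * m) * sigma 1 u = 2 * N := by
    rw [← hm, ← sigma_one_prime_mul hq (Nat.Coprime.pow_right 2 hgcd) hp hn0 hvn, ← hN,
      sigma_one_apply, (Nat.perfect_iff_sum_divisors_eq_two_mul hperf.2).1 hperf]
  have hval : (q + 1).factorization p + (sigma 1 u).factorization p = 2 * b :=
    hvN ▸ factorization_add_eq_of_mul_mul_eq_two_mul hp2
      (hm ▸ hp.not_dvd_sigma_one_pow _) hN0 hσN
  have hσu0 : sigma 1 u ≠ 0 := (sigma_pos 1 _ hu0).ne'
  have hlt : 4 * q < m * sigma 1 u :=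
    four_mul_lt_mul_of_dvd_sigma hp hp2 hm.symm (hp.factorization_pos_of_dvd (by omega) hpq)
      (by omega) (Nat.ordProj_dvd _ _) hσu0 ((hp.pow_dvd_iff_le_factorization hσu0).2 (by omega))
  have := Nat.mul_lt_mul_of_pos_left hlt (Nat.mul_pos (Nat.succ_pos q) hq.pos)
  nlinarith

theorem stmt_11 (N q n p b : ℕ) (hN : N = q * n ^ 2) (hodd : Odd N) (hperf : Nat.Perfect N)
    (hq : q.Prime) (hq4 : q % 4 = 1) (hgcd : Nat.gcd q n = 1)
    (hnielsen : 9 ≤ N.primeFactors.card)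
    (hp : p.Prime) (hpn : p ∣ n) (hpb : p ^ (2 * b) ∣ N) (hpb' : ¬ p ^ (2 * b + 1) ∣ N)
    (hqdvd : q ∣ ArithmeticFunction.sigma 1 (p ^ (2 * b)))
    (huniq : ∀ p' b', p'.Prime → p' ∣ n → p' ^ (2 * b') ∣ N → ¬ p' ^ (2 * b' + 1) ∣ N →
      q ∣ ArithmeticFunction.sigma 1 (p' ^ (2 * b')) → p' = p)
    (hpq : p ∣ q + 1) : N > 2 * q ^ 3 :=
  stmt_11_general N q n p b hN hodd hperf hq hgcd hp hpn hpb hpb' hqdvd hpq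
end

section
/- Let N be an odd perfect number. Then the sum of the reciprocals of the distinct primes dividing N is less than ln 2. -/
/-!
Write `A(m) = σ(m) / m` for the abundancy index. It is multiplicative and `A(N) = 2`, so
`∑_{p ∣ N} log A(p ^ a_p) = log 2` and it suffices to compare `1 / p` with `log A(p ^ a_p)`.
All primes dividing `N` are at least `3`, so for `a_p ≥ 2` we get
`A(p ^ a_p) ≥ 1 + 1/p + 1/p² > exp (1/p)`. Since `σ(p) = p + 1` is even and `4 ∤ 2N`, at most one
prime `q` has `a_q = 1`, and for it `log A(q) = log (1 + 1/q) < 1/q`. But then `(q + 1) / 2` divides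
`N`, so `N` has a prime factor `r ≤ (q + 1) / 2`, and `(1 + 1/q) (1 + 1/r + 1/r²) > exp (1/q + 1/r)`
absorbs the deficit.
-/

open Finset Real

theorem Finset.sum_lt_sum_of_pair {ι M : Type*} [AddCommMonoid M] [PartialOrder M]
    [IsOrderedCancelAddMonoid M] {s : Finset ι} {f g : ι → M} {i j : ι} (hi : i ∈ s)
    (hj : j ∈ s) (hij : i ≠ j) (hle : ∀ k ∈ s, k ≠ i → k ≠ j → f k ≤ g k)
    (hlt : f i + f j < g i + g j) : ∑ k ∈ s, f k < ∑ k ∈ s, g k := by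
  classical
  have hj' : j ∈ s.erase i := mem_erase.2 ⟨hij.symm, hj⟩
  rw [← add_sum_erase s f hi, ← add_sum_erase _ f hj', ← add_sum_erase s g hi,
    ← add_sum_erase _ g hj', ← add_assoc, ← add_assoc]
  refine add_lt_add_of_lt_of_le hlt (sum_le_sum fun k hk => ?_)
  obtain ⟨hkj, hk⟩ := mem_erase.1 hk
  obtain ⟨hki, hk⟩ := mem_erase.1 hk
  exact hle k hk hki hkj

theorem one_add_add_sq_le_sum_range_pow {R : Type*} [Semiring R] [PartialOrder R]
    [IsOrderedRing R] {x : R} (hx : 0 ≤ x) {k : ℕ} (hk : 2 ≤ k) :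
    1 + x + x ^ 2 ≤ ∑ i ∈ range (k + 1), x ^ i :=
  calc 1 + x + x ^ 2 = ∑ i ∈ range 3, x ^ i := by simp [sum_range_succ]
    _ ≤ ∑ i ∈ range (k + 1), x ^ i :=
      sum_le_sum_of_subset_of_nonneg (range_subset_range.2 (by omega))
        fun i _ _ => pow_nonneg hx i

namespace Real

theorem exp_le_cubic {x : ℝ} (h0 : 0 ≤ x) (h1 : x ≤ 1) :
    exp x ≤ 1 + x + x ^ 2 / 2 + 2 * x ^ 3 / 9 := by
  have h := exp_bound' h0 h1 (n := 3) (by norm_num)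
  norm_num [sum_range_succ, Nat.factorial] at h
  linarith

theorem exp_lt_one_add_add_sq {x : ℝ} (h0 : 0 < x) (h1 : x ≤ 1 / 3) :
    exp x < 1 + x + x ^ 2 := by
  nlinarith [exp_le_cubic h0.le (by linarith), pow_pos h0 2]

theorem exp_add_lt_one_add_mul_one_add_add_sq {x y : ℝ} (hx : 0 < x) (hy : 0 < y) (hy3 : y ≤ 1 / 3)
    (hxy : x * (2 - y) ≤ y) : exp (x + y) < (1 + x) * (1 + y + y ^ 2) := by
  have hx5 : x ≤ 3 * y / 5 := by nlinarith
  nlinarith [exp_le_cubic (x := x + y) (by linarith) (by linarith), sq_nonneg (x + y),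
    sq_nonneg y, mul_pos hx hy]

end Real

namespace Nat

theorem abundancyIndex_pos {n : ℕ} (hn : n ≠ 0) : 0 < n.abundancyIndex := by
  rw [abundancyIndex]
  have hsum : 0 < ∑ d ∈ n.divisors, d :=
    sum_pos (fun d hd => pos_of_mem_divisors hd) (nonempty_divisors.2 hn)
  have : 0 < n := pos_of_ne_zero hn
  positivity

theorem Prime.abundancyIndex_pow {p : ℕ} (hp : p.Prime) (k : ℕ) :
    (p ^ k).abundancyIndex = ∑ i ∈ range (k + 1), (p : ℚ)⁻¹ ^ i := by
  have hp0 : (p : ℚ) ≠ 0 := by exact_mod_cast hp.ne_zero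
  rw [abundancyIndex, sum_divisors_prime_pow hp, ← sum_range_reflect]
  push_cast
  rw [sum_div]
  refine sum_congr rfl fun i hi => ?_
  rw [pow_sub₀ _ hp0 (by simpa [Nat.lt_succ_iff] using hi), inv_pow]
  field_simp

theorem abundancyIndex_eq_prod_primeFactors {n : ℕ} (hn : n ≠ 0) :
    n.abundancyIndex = ∏ p ∈ n.primeFactors, (p ^ n.factorization p).abundancyIndex := by
  have hprod : (n : ℚ) = ∏ p ∈ n.primeFactors, (p : ℚ) ^ n.factorization p := by
    exact_mod_cast prod_primeFactors_pow_factorization hn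
  rw [abundancyIndex, sum_divisors hn, hprod]
  push_cast
  rw [← prod_div_distrib]
  refine prod_congr rfl fun p hp => ?_
  rw [abundancyIndex, sum_divisors_prime_pow (prime_of_mem_primeFactors hp)]
  push_cast
  rfl

theorem Perfect.abundancyIndex_eq_two {n : ℕ} (h : n.Perfect) : n.abundancyIndex = 2 := by
  rw [abundancyIndex, (perfect_iff_sum_divisors_eq_two_mul h.2).1 h]
  push_cast
  field_simp [h.2.ne']

theorem odd_of_mem_primeFactors_of_odd {n p : ℕ} (hn : Odd n) (hp : p ∈ n.primeFactors) :
    Odd p :=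
  hn.of_dvd_nat (dvd_of_mem_primeFactors hp)

theorem three_le_of_mem_primeFactors_of_odd {n p : ℕ} (hn : Odd n) (hp : p ∈ n.primeFactors) :
    3 ≤ p := by
  have hodd := odd_iff.1 (odd_of_mem_primeFactors_of_odd hn hp)
  have := (prime_of_mem_primeFactors hp).two_le
  omega

theorem Perfect.one_lt {n : ℕ} (h : n.Perfect) : 1 < n := by
  obtain ⟨hsum, hpos⟩ := h
  by_contra hle
  obtain rfl : n = 1 := by omega
  simp at hsum

theorem Perfect.sum_log_abundancyIndex_prime_pow {n : ℕ} (h : n.Perfect) :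
    ∑ p ∈ n.primeFactors, Real.log ((p ^ n.factorization p).abundancyIndex : ℝ) = Real.log 2 := by
  rw [← Real.log_prod fun p hp => ?_, ← Rat.cast_prod,
    ← abundancyIndex_eq_prod_primeFactors h.2.ne', h.abundancyIndex_eq_two, Rat.cast_ofNat]
  exact_mod_cast (abundancyIndex_pos (pow_ne_zero _ (prime_of_mem_primeFactors hp).ne_zero)).ne'

theorem Perfect.prod_sum_range_pow {n : ℕ} (h : n.Perfect) :
    ∏ p ∈ n.primeFactors, ∑ k ∈ range (n.factorization p + 1), p ^ k = 2 * n :=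
  (sum_divisors h.2.ne').symm.trans ((perfect_iff_sum_divisors_eq_two_mul h.2).1 h)

theorem Perfect.succ_dvd_two_mul {n q : ℕ} (h : n.Perfect) (hq : q ∈ n.primeFactors)
    (hq1 : n.factorization q = 1) : q + 1 ∣ 2 * n := by
  have hdvd := dvd_prod_of_mem (fun p => ∑ k ∈ range (n.factorization p + 1), p ^ k) hq
  rw [h.prod_sum_range_pow] at hdvd
  simpa [hq1, sum_range_succ, add_comm] using hdvd

theorem Perfect.eq_of_factorization_eq_one {n p q : ℕ} (h : n.Perfect) (hn : Odd n)
    (hp : p ∈ n.primeFactors) (hq : q ∈ n.primeFactors) (hp1 : n.factorization p = 1)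
    (hq1 : n.factorization q = 1) : p = q := by
  by_contra hpq
  have hdvd := prod_dvd_prod_of_subset {p, q} n.primeFactors
    (fun p => ∑ k ∈ range (n.factorization p + 1), p ^ k)
    (insert_subset hp (singleton_subset_iff.2 hq))
  rw [prod_pair hpq, h.prod_sum_range_pow] at hdvd
  simp only [hp1, hq1, sum_range_succ, range_one, sum_singleton, pow_zero, pow_one] at hdvd
  have h4 : 2 * 2 ∣ (1 + p) * (1 + q) := by
    rw [add_comm 1 p, add_comm 1 q]
    exact mul_dvd_mul (even_iff_two_dvd.1 (odd_of_mem_primeFactors_of_odd hn hp).add_one)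
      (even_iff_two_dvd.1 (odd_of_mem_primeFactors_of_odd hn hq).add_one)
  have := h4.trans hdvd
  have := odd_iff.1 hn
  omega

theorem Perfect.exists_two_mul_le_succ {n q : ℕ} (h : n.Perfect) (hn : Odd n)
    (hq : q ∈ n.primeFactors) (hq1 : n.factorization q = 1) :
    ∃ r ∈ n.primeFactors, 2 * r ≤ q + 1 := by
  have hq3 := three_le_of_mem_primeFactors_of_odd hn hq
  obtain ⟨u, hu⟩ : ∃ u, q + 1 = 2 * u :=
    even_iff_two_dvd.1 (odd_of_mem_primeFactors_of_odd hn hq).add_one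
  have hun : u ∣ n := Nat.dvd_of_mul_dvd_mul_left two_pos (hu ▸ h.succ_dvd_two_mul hq hq1)
  have hu1 : u ≠ 1 := by omega
  refine ⟨u.minFac, mem_primeFactors.2 ⟨minFac_prime hu1, (minFac_dvd u).trans hun, h.2.ne'⟩, ?_⟩
  have := minFac_le (show 0 < u by omega)
  omega

end Nat

namespace Nat.Prime

theorem one_add_inv_add_inv_sq_le_abundancyIndex_pow {p k : ℕ} (hp : p.Prime) (hk : 2 ≤ k) :
    1 + (p : ℝ)⁻¹ + (p : ℝ)⁻¹ ^ 2 ≤ ((p ^ k).abundancyIndex : ℝ) := by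
  rw [hp.abundancyIndex_pow]
  push_cast
  exact one_add_add_sq_le_sum_range_pow (by positivity) hk

theorem inv_lt_log_abundancyIndex_pow {p k : ℕ} (hp : p.Prime) (hp3 : 3 ≤ p) (hk : 2 ≤ k) :
    (p : ℝ)⁻¹ < Real.log ((p ^ k).abundancyIndex : ℝ) := by
  have hp3' : (p : ℝ)⁻¹ ≤ 1 / 3 := by
    rw [one_div]; exact inv_anti₀ (by norm_num) (by exact_mod_cast hp3)
  rw [Real.lt_log_iff_exp_lt (by exact_mod_cast abundancyIndex_pos (pow_ne_zero k hp.ne_zero))]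
  exact (Real.exp_lt_one_add_add_sq (by positivity) hp3').trans_le
    (hp.one_add_inv_add_inv_sq_le_abundancyIndex_pow hk)

theorem inv_add_inv_lt_log_abundancyIndex_add {q r k : ℕ} (hq : q.Prime) (hr : r.Prime)
    (hr3 : 3 ≤ r) (hrq : 2 * r ≤ q + 1) (hk : 2 ≤ k) :
    (q : ℝ)⁻¹ + (r : ℝ)⁻¹ <
      Real.log (q.abundancyIndex : ℝ) + Real.log ((r ^ k).abundancyIndex : ℝ) := by
  have hq0 : (0 : ℝ) < q := by exact_mod_cast hq.pos
  have hr0 : (0 : ℝ) < r := by exact_mod_cast hr.pos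
  have hr3' : (r : ℝ)⁻¹ ≤ 1 / 3 := by
    rw [one_div]; exact inv_anti₀ (by norm_num) (by exact_mod_cast hr3)
  have hrq' : (q : ℝ)⁻¹ * (2 - (r : ℝ)⁻¹) ≤ (r : ℝ)⁻¹ := by
    have : 2 * (r : ℝ) ≤ q + 1 := by exact_mod_cast hrq
    rw [← sub_nonneg]
    field_simp
    linarith
  have hAq : (q.abundancyIndex : ℝ) = 1 + (q : ℝ)⁻¹ := by
    simpa [sum_range_succ] using congrArg ((↑) : ℚ → ℝ) (hq.abundancyIndex_pow 1)
  have hAr := hr.one_add_inv_add_inv_sq_le_abundancyIndex_pow hk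
  have hAr0 : (0 : ℝ) < (r ^ k).abundancyIndex := by
    exact_mod_cast abundancyIndex_pos (pow_ne_zero k hr.ne_zero)
  rw [hAq, ← Real.log_mul (by positivity) (by positivity), lt_log_iff_exp_lt (by positivity)]
  calc Real.exp ((q : ℝ)⁻¹ + (r : ℝ)⁻¹) < (1 + (q : ℝ)⁻¹) * (1 + (r : ℝ)⁻¹ + (r : ℝ)⁻¹ ^ 2) :=
        exp_add_lt_one_add_mul_one_add_add_sq (by positivity) (by positivity) hr3' hrq'
    _ ≤ _ := by gcongr

end Nat.Prime

theorem stmt_13 (N : ℕ) (hodd : Odd N) (hperf : Nat.Perfect N) :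
    ∑ p ∈ N.primeFactors, (1 : ℝ) / p < Real.log 2 := by
  have htwo : ∀ p ∈ N.primeFactors, N.factorization p ≠ 1 → 2 ≤ N.factorization p :=
    fun p hp hp1 => by
      have : N.factorization p ≠ 0 := Finsupp.mem_support_iff.1 hp
      omega
  have hlt : ∀ p ∈ N.primeFactors, N.factorization p ≠ 1 →
      (p : ℝ)⁻¹ < log ((p ^ N.factorization p).abundancyIndex : ℝ) := fun p hp hp1 =>
    (Nat.prime_of_mem_primeFactors hp).inv_lt_log_abundancyIndex_pow
      (Nat.three_le_of_mem_primeFactors_of_odd hodd hp) (htwo p hp hp1)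
  simp only [one_div]
  rw [← hperf.sum_log_abundancyIndex_prime_pow]
  by_cases hone : ∃ q ∈ N.primeFactors, N.factorization q = 1
  · obtain ⟨q, hq, hq1⟩ := hone
    obtain ⟨r, hr, hrq⟩ := hperf.exists_two_mul_le_succ hodd hq hq1
    have hr3 := Nat.three_le_of_mem_primeFactors_of_odd hodd hr
    have hrq_ne : r ≠ q := by omega
    have hunique : ∀ p ∈ N.primeFactors, p ≠ q → N.factorization p ≠ 1 :=
      fun p hp hpq hp1 => hpq (hperf.eq_of_factorization_eq_one hodd hp hq hp1 hq1)
    refine sum_lt_sum_of_pair hq hr hrq_ne.symm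
      (fun p hp hpq _ => (hlt p hp (hunique p hp hpq)).le) ?_
    rw [hq1, pow_one]
    exact (Nat.prime_of_mem_primeFactors hq).inv_add_inv_lt_log_abundancyIndex_add
      (Nat.prime_of_mem_primeFactors hr) hr3 hrq (htwo r hr (hunique r hr hrq_ne))
  · push Not at hone
    exact sum_lt_sum_of_nonempty (Nat.nonempty_primeFactors.2 hperf.one_lt)
      fun p hp => hlt p hp (hone p hp)
end

section
/- Let q ≥ 5 be a prime and k an integer with k ≡ 1 (mod 4), k ≥ 5. Then every prime divisor r of 1 + q^2 + q^4 + ... + q^{k-1} satisfies r ≥ 7, provided that either r equals the whole sum or r ≡ 1 (mod (k+1)/2). -/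
/-!
If `r` is the whole sum, it is at least its term `q ^ 2 ≥ 25`. Otherwise `m = (k + 1) / 2` is odd,
because `k ≡ 1 (mod 4)`, and `r = a * m + 1`: here `a = 0` gives `r = 1` and `a = 1` gives the even
number `r = m + 1 > 2`, so `a ≥ 2` and `r ≥ 2 * m + 1 ≥ 7`.
-/

open Finset

theorem sq_le_sum_range_pow_two_mul (q : ℕ) {n : ℕ} (hn : 1 ≤ n) :
    q ^ 2 ≤ ∑ i ∈ range (n + 1), q ^ (2 * i) :=
  single_le_sum (f := fun i => q ^ (2 * i)) (fun _ _ => Nat.zero_le _)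
    (mem_range.mpr (by omega : 1 < n + 1))

theorem Nat.Prime.two_mul_add_one_le_of_mod_eq_one {r m : ℕ} (hr : r.Prime) (hm : Odd m)
    (h : r % m = 1) : 2 * m + 1 ≤ r := by
  have hdecomp : r = m * (r / m) + 1 := by have := Nat.div_add_mod r m; omega
  generalize r / m = a at hdecomp
  rcases a with _ | _ | a
  · exact absurd (by omega : r = 1) hr.ne_one
  · have hr2 : r = 2 := hr.even_iff.mp (by rw [hdecomp, zero_add, mul_one]; exact hm.add_one)
    have hm1 : m = 1 := by omega
    simp [hm1, Nat.mod_one] at h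
  · nlinarith

theorem stmt_15_general (q k r : ℕ) (hq5 : 5 ≤ q) (hk4 : k % 4 = 1) (hk5 : 5 ≤ k)
    (hr : r.Prime)
    (hcond : r = ∑ i ∈ Finset.range ((k - 1) / 2 + 1), q ^ (2 * i) ∨ r % ((k + 1) / 2) = 1) :
    r ≥ 7 := by
  rcases hcond with hsum | hmod
  · have hsq := sq_le_sum_range_pow_two_mul q (n := (k - 1) / 2) (by omega)
    nlinarith
  · have hodd : Odd ((k + 1) / 2) := Nat.odd_iff.mpr (by omega)
    have := hr.two_mul_add_one_le_of_mod_eq_one hodd hmod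
    omega

theorem stmt_15 (q k r : ℕ) (hq : q.Prime) (hq5 : 5 ≤ q) (hk4 : k % 4 = 1) (hk5 : 5 ≤ k)
    (hr : r.Prime) (hdvd : r ∣ ∑ i ∈ Finset.range ((k - 1) / 2 + 1), q ^ (2 * i))
    (hcond : r = ∑ i ∈ Finset.range ((k - 1) / 2 + 1), q ^ (2 * i) ∨ r % ((k + 1) / 2) = 1) :
    r ≥ 7 :=
  stmt_15_general q k r hq5 hk4 hk5 hr hcond
end
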